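/- Let n ≥ 4 and let x ∈ 𝒩 belong to a circuit of the counting operator, i.e., s^[l](x) = x for some integer l ≥ 1. Then x_0 ≥ 1. -/
import Mathlib


/-- The counting operator: `countOp n x j` is the number of indices `i` with `x i = j`. -/
def countOp (n : ℕ) (x : Fin n → ℕ) : Fin n → ℕ :=
  fun j => (Finset.univ.filter fun i => x i = (j : ℕ)).card

/-- `𝒩`: the set of `n`-chains that are neither constant nor injective. -/
def NSet (n : ℕ) : Set (Fin n → ℕ) :=
  {x | (∀ i, x i < n) ∧ (¬ ∃ c, ∀ i, x i = c) ∧ ¬ Function.Injective x}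

lemma sum_countOp_le (n : ℕ) (w : Fin n → ℕ) : ∑ j : Fin n, countOp n w j ≤ n := by
  classical
  have hdisj : ∀ j ∈ (Finset.univ : Finset (Fin n)), ∀ k ∈ (Finset.univ : Finset (Fin n)),
      j ≠ k → Disjoint (Finset.univ.filter fun i => w i = (j : ℕ))
        (Finset.univ.filter fun i => w i = (k : ℕ)) := by
    intro j _ k _ hjk
    rw [Finset.disjoint_left]
    intro i hi hi'
    simp only [Finset.mem_filter] at hi hi'
    exact hjk (Fin.val_injective (hi.2 ▸ hi'.2))
  calc ∑ j : Fin n, countOp n w j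
      = (Finset.univ.biUnion fun j : Fin n =>
          Finset.univ.filter fun i => w i = (j : ℕ)).card :=
        (Finset.card_biUnion hdisj).symm
    _ ≤ (Finset.univ : Finset (Fin n)).card := Finset.card_le_card (Finset.subset_univ _)
    _ = n := by simp

theorem circuit_first_pos (n : ℕ) (hn : 4 ≤ n) (x : Fin n → ℕ) (hx : x ∈ NSet n)
    (hcirc : ∃ l, 1 ≤ l ∧ (countOp n)^[l] x = x) :
    1 ≤ x ⟨0, by omega⟩ := by
  classical
  by_contra h
  have h0 : x ⟨0, by omega⟩ = 0 := by omega
  obtain ⟨l, hl, hfix⟩ := hcirc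
  obtain ⟨m, rfl⟩ : ∃ m, l = m + 1 := ⟨l - 1, by omega⟩
  obtain ⟨y, hxy, z, hzy⟩ : ∃ y, countOp n y = x ∧ ∃ z, countOp n z = y := by
    refine ⟨(countOp n)^[m] x, ?_, (countOp n)^[m] ((countOp n)^[m] x), ?_⟩
    · have h1 := Function.iterate_succ_apply' (countOp n) m x
      rw [hfix] at h1
      exact h1.symm
    · have hyfix : (countOp n)^[m + 1] ((countOp n)^[m] x) = (countOp n)^[m] x := by
        rw [← Function.iterate_add_apply, add_comm, Function.iterate_add_apply, hfix]
      have h1 := Function.iterate_succ_apply' (countOp n) m ((countOp n)^[m] x)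
      rw [hyfix] at h1
      exact h1.symm
  -- no entry of y is 0
  have hy1 : ∀ i, 1 ≤ y i := by
    intro i
    have h0' : countOp n y ⟨0, by omega⟩ = 0 := by rw [hxy]; exact h0
    rw [countOp, Finset.card_eq_zero, Finset.filter_eq_empty_iff] at h0'
    have := h0' (Finset.mem_univ i)
    simp only [Fin.val_mk] at this
    omega
  -- sum of y is at most n
  have hsum : ∑ i : Fin n, y i ≤ n := by
    rw [← hzy]; exact sum_countOp_le n _
  -- hence y is identically 1
  have hyone : ∀ i, y i = 1 := by
    intro i
    by_contra hne
    have h2 : 2 ≤ y i := by have := hy1 i; omega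
    have hlt : ∑ _j : Fin n, 1 < ∑ j : Fin n, y j :=
      Finset.sum_lt_sum (fun j _ => hy1 j) ⟨i, Finset.mem_univ i, by omega⟩
    simp only [Finset.sum_const, Finset.card_univ, Fintype.card_fin, smul_eq_mul,
      mul_one] at hlt
    omega
  -- then x at index 1 equals n, contradiction
  have hx1 : x ⟨1, by omega⟩ = n := by
    have : countOp n y ⟨1, by omega⟩ = n := by
      simp only [countOp]
      rw [Finset.filter_true_of_mem (fun i _ => hyone i)]
      simp
    rw [hxy] at this
    exact this
  have := hx.1 ⟨1, by omega⟩
  omega
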